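/- The map Φ̃ ramifies along Σ: in the affine chart b₀ = 1, write f(b₁, b₂) = (b₁t − b₂)/(t − b₁) and g(b₁, b₂) = −b₁(λ − b₁λ − b₁ + b₂)/(b₁² − b₂) for the two coordinates of Φ̃(1 : b₁ : b₂). Then for every (b₁, b₂) ∈ ℂ² with (t − b₁)(b₁² − b₂) ≠ 0 and Σ(1, b₁, b₂) = 0, the Jacobian determinant ∂f/∂b₁ · ∂g/∂b₂ − ∂f/∂b₂ · ∂g/∂b₁ vanishes at (b₁, b₂). -/

import Mathlib

/-- The cubic `Σ ⊂ ℙ²(ℂ)`, ramification locus of `Φ̃`. -/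
noncomputable def SigmaCubic (l t b₀ b₁ b₂ : ℂ) : ℂ :=
  -(l * t ^ 2) * b₀ ^ 2 * b₁ + l * t * b₀ ^ 2 * b₂
    + (l * t ^ 2 + l * t + t ^ 2) * b₀ * b₁ ^ 2 - (t ^ 2 + l) * b₁ ^ 3
    - 2 * (l * t + t) * b₀ * b₁ * b₂ + (l + t + 1) * b₁ ^ 2 * b₂
    + t * b₀ * b₂ ^ 2 - b₁ * b₂ ^ 2

/-- First coordinate of `Φ̃` in the affine chart `b₀ = 1`. -/
noncomputable def fChart (t b₁ b₂ : ℂ) : ℂ := (b₁ * t - b₂) / (t - b₁)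

/-- Second coordinate of `Φ̃` in the affine chart `b₀ = 1`. -/
noncomputable def gChart (l b₁ b₂ : ℂ) : ℂ :=
  -b₁ * (l - b₁ * l - b₁ + b₂) / (b₁ ^ 2 - b₂)

section ChartDerivatives

variable {l t b₁ b₂ : ℂ}

theorem hasDerivAt_fChart_left (h : t - b₁ ≠ 0) :
    HasDerivAt (fun x => fChart t x b₂) ((t ^ 2 - b₂) / (t - b₁) ^ 2) b₁ := by
  refine ((((hasDerivAt_id b₁).mul_const t).sub_const b₂).fun_div
    ((hasDerivAt_id b₁).const_sub t) h).congr_deriv ?_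
  simp only [id]
  field_simp
  ring

theorem hasDerivAt_fChart_right :
    HasDerivAt (fun x => fChart t b₁ x) (-1 / (t - b₁)) b₂ :=
  ((hasDerivAt_id b₂).const_sub (b₁ * t)).div_const (t - b₁) |>.congr_deriv (by simp)

theorem hasDerivAt_gChart_left (h : b₁ ^ 2 - b₂ ≠ 0) :
    HasDerivAt (fun x => gChart l x b₂)
      ((l * b₁ ^ 2 + l * b₂ - 2 * (l + 1) * b₁ * b₂ + b₁ ^ 2 * b₂ + b₂ ^ 2) / (b₁ ^ 2 - b₂) ^ 2)
      b₁ := by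
  have hN : HasDerivAt (fun x : ℂ => -x * (l - x * l - x + b₂))
      (-(l - b₁ * l - b₁ + b₂) + b₁ * (l + 1)) b₁ :=
    ((hasDerivAt_id b₁).fun_neg.fun_mul
      ((((hasDerivAt_id b₁).mul_const l).const_sub l).fun_sub (hasDerivAt_id b₁) |>.add_const b₂)
      ).congr_deriv (by simp only [id]; ring)
  refine (hN.fun_div ((hasDerivAt_pow 2 b₁).sub_const b₂) h).congr_deriv ?_
  field_simp
  ring

theorem hasDerivAt_gChart_right (h : b₁ ^ 2 - b₂ ≠ 0) :
    HasDerivAt (fun x => gChart l b₁ x) (-b₁ * (b₁ - 1) * (b₁ - l) / (b₁ ^ 2 - b₂) ^ 2) b₂ := by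
  refine ((((hasDerivAt_id b₂).const_add (l - b₁ * l - b₁)).const_mul (-b₁)).fun_div
    ((hasDerivAt_id b₂).const_sub (b₁ ^ 2)) h).congr_deriv ?_
  simp only [id]
  field_simp
  ring

end ChartDerivatives

theorem jacobian_chart_eq_sigmaCubic_div {l t b₁ b₂ : ℂ} (h : (t - b₁) * (b₁ ^ 2 - b₂) ≠ 0) :
    deriv (fun x => fChart t x b₂) b₁ * deriv (fun x => gChart l b₁ x) b₂ -
        deriv (fun x => fChart t b₁ x) b₂ * deriv (fun x => gChart l x b₂) b₁ =
      SigmaCubic l t 1 b₁ b₂ / ((t - b₁) ^ 2 * (b₁ ^ 2 - b₂) ^ 2) := by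
  obtain ⟨hf, hg⟩ := mul_ne_zero_iff.mp h
  rw [hasDerivAt_fChart_left hf |>.deriv, hasDerivAt_gChart_right hg |>.deriv,
    hasDerivAt_fChart_right.deriv, hasDerivAt_gChart_left hg |>.deriv, SigmaCubic]
  field_simp
  ring

theorem jacobian_vanishes_on_sigma_general (l t : ℂ)
    (b₁ b₂ : ℂ) (h : (t - b₁) * (b₁ ^ 2 - b₂) ≠ 0)
    (hS : SigmaCubic l t 1 b₁ b₂ = 0) :
    deriv (fun x => fChart t x b₂) b₁ * deriv (fun x => gChart l b₁ x) b₂ -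
        deriv (fun x => fChart t b₁ x) b₂ * deriv (fun x => gChart l x b₂) b₁ = 0 := by
  rw [jacobian_chart_eq_sigmaCubic_div h, hS, zero_div]

/-- The map `Φ̃` ramifies along `Σ`: in the affine chart `b₀ = 1`, with
`f(b₁, b₂) = (b₁t − b₂)/(t − b₁)` and `g(b₁, b₂) = −b₁(λ − b₁λ − b₁ + b₂)/(b₁² − b₂)` the
two coordinates of `Φ̃(1 : b₁ : b₂)`, for every `(b₁, b₂) ∈ ℂ²` with
`(t − b₁)(b₁² − b₂) ≠ 0` and `Σ(1, b₁, b₂) = 0`, the Jacobian determinant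
`∂f/∂b₁ · ∂g/∂b₂ − ∂f/∂b₂ · ∂g/∂b₁` vanishes at `(b₁, b₂)`. -/
theorem jacobian_vanishes_on_sigma (l t : ℂ) (hl0 : l ≠ 0) (hl1 : l ≠ 1)
    (ht0 : t ≠ 0) (ht1 : t ≠ 1) (htl : t ≠ l)
    (b₁ b₂ : ℂ) (h : (t - b₁) * (b₁ ^ 2 - b₂) ≠ 0)
    (hS : SigmaCubic l t 1 b₁ b₂ = 0) :
    deriv (fun x => fChart t x b₂) b₁ * deriv (fun x => gChart l b₁ x) b₂ -
        deriv (fun x => fChart t b₁ x) b₂ * deriv (fun x => gChart l x b₂) b₁ = 0 :=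
  jacobian_vanishes_on_sigma_general l t b₁ b₂ h hS
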